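/- Let T < 0 and let H, φ : ℝ → ℝ be continuously differentiable on [T, 0] with H(0) = β > 0. If H'(t) − 3·H(t)^4·exp(φ(t)) + H(t)^2 < 0 for all t ∈ (T, 0), then H(t) > 0 for all t ∈ [T, 0). -/

import Mathlib

/-!
Just after a zero `s` of `H` the factor `3 H² e^φ − 1` is close to `−1`, so `D₃ < 0` gives
`H' < H² (3 H² e^φ − 1) ≤ 0`: `H` strictly decreases and becomes negative right after each of
its zeros. By real induction on the closed set `{H ≤ 0}`, a nonpositive value of `H` at some
`t < 0` would then propagate forward up to time `0`, contradicting `H 0 = β > 0`.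
-/

open Set Filter Topology Real

noncomputable def hubbleD₃ (H φ : ℝ → ℝ) (t : ℝ) : ℝ :=
  deriv H t - 3 * H t ^ 4 * exp (φ t) + H t ^ 2

theorem eventually_nhdsGT_lt_of_deriv_neg {f : ℝ → ℝ} {s : ℝ}
    (hf : ContinuousWithinAt f (Ici s) s) (hd : ∀ᶠ u in 𝓝[>] s, deriv f u < 0) :
    ∀ᶠ u in 𝓝[>] s, f u < f s := by
  obtain ⟨c, hc, hcd⟩ := mem_nhdsGT_iff_exists_Ioo_subset.1 hd
  have hcont : ContinuousOn f (Ico s c) := by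
    intro u hu
    rcases hu.1.eq_or_lt with rfl | hsu
    · exact hf.mono Ico_subset_Ici_self
    · exact (differentiableAt_of_deriv_ne_zero (hcd ⟨hsu, hu.2⟩).ne).continuousAt
        |>.continuousWithinAt
  have hanti : StrictAntiOn f (Ico s c) :=
    strictAntiOn_of_deriv_neg (convex_Ico s c) hcont (by rwa [interior_Ico])
  filter_upwards [Ioo_mem_nhdsGT hc] with u hu
  exact hanti ⟨le_rfl, hc⟩ ⟨hu.1.le, hu.2⟩ hu.1

theorem pos_of_eventually_neg_after_zeros {f : ℝ → ℝ} {a b : ℝ}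
    (hf : ContinuousOn f (Icc a b)) (hb : 0 < f b)
    (hzero : ∀ s ∈ Ico a b, f s = 0 → ∀ᶠ u in 𝓝[>] s, f u < 0) :
    ∀ t ∈ Icc a b, 0 < f t := by
  intro t ht
  by_contra! hft
  have hclosed : IsClosed ({x | f x ≤ 0} ∩ Icc t b) := by
    rw [inter_comm]
    exact (hf.mono (Icc_subset_Icc_left ht.1)).preimage_isClosed_of_isClosed
      isClosed_Icc isClosed_Iic
  have hprop : Icc t b ⊆ {x | f x ≤ 0} := by
    refine hclosed.Icc_subset_of_forall_mem_nhdsWithin hft fun x ⟨hx, hxtb⟩ ↦ ?_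
    have hxab : x ∈ Ico a b := ⟨ht.1.trans hxtb.1, hxtb.2⟩
    rcases (show f x ≤ 0 from hx).lt_or_eq with hneg | hzero'
    · have hnear : ∀ᶠ u in 𝓝[Icc a b] x, f u < 0 :=
        hf x (Ico_subset_Icc_self hxab) (gt_mem_nhds hneg)
      filter_upwards [nhdsWithin_le_of_mem (Icc_mem_nhdsGT_of_mem hxab) hnear] with u hu
      exact hu.le
    · filter_upwards [hzero x hxab hzero'] with u hu
      exact hu.le
  exact (hprop ⟨ht.2, le_rfl⟩).not_gt hb

theorem eventually_deriv_neg_of_hubbleD₃_neg {H φ : ℝ → ℝ} {s : ℝ}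
    (hH : ContinuousWithinAt H (Ioi s) s) (hφ : ContinuousWithinAt φ (Ioi s) s)
    (hs : H s = 0) (hD : ∀ᶠ u in 𝓝[>] s, hubbleD₃ H φ u < 0) :
    ∀ᶠ u in 𝓝[>] s, deriv H u < 0 := by
  have hfactor : ∀ᶠ u in 𝓝[>] s, 3 * H u ^ 2 * exp (φ u) - 1 < 0 := by
    have hcont : ContinuousWithinAt (fun u ↦ 3 * H u ^ 2 * exp (φ u) - 1) (Ioi s) s := by
      fun_prop
    exact hcont (gt_mem_nhds (by simp [hs]))
  filter_upwards [hD, hfactor] with u hDu hfu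
  have hsplit : 3 * H u ^ 4 * exp (φ u) - H u ^ 2 =
      H u ^ 2 * (3 * H u ^ 2 * exp (φ u) - 1) := by
    ring
  have := mul_nonpos_of_nonneg_of_nonpos (sq_nonneg (H u)) hfu.le
  unfold hubbleD₃ at hDu
  linarith

theorem stmt_13 (T β : ℝ) (H φ : ℝ → ℝ)
    (hH : ContDiffOn ℝ 1 H (Set.Icc T 0)) (hφ : ContDiffOn ℝ 1 φ (Set.Icc T 0))
    (h0 : H 0 = β) (hβ : 0 < β)
    (hD : ∀ t ∈ Set.Ioo T 0,
      deriv H t - 3 * H t ^ 4 * Real.exp (φ t) + H t ^ 2 < 0) :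
    ∀ t ∈ Set.Ico T 0, 0 < H t := by
  have hright {f : ℝ → ℝ} (hf : ContDiffOn ℝ 1 f (Icc T 0)) {s : ℝ} (hs : s ∈ Ico T 0) :
      ContinuousWithinAt f (Ici s) s :=
    (hf.continuousOn s (Ico_subset_Icc_self hs)).mono_of_mem_nhdsWithin
      (Icc_mem_nhdsGE_of_mem hs)
  refine fun t ht ↦ pos_of_eventually_neg_after_zeros hH.continuousOn (h0 ▸ hβ)
    (fun s hs hs0 ↦ ?_) t (Ico_subset_Icc_self ht)
  have hDs : ∀ᶠ u in 𝓝[>] s, hubbleD₃ H φ u < 0 := by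
    filter_upwards [Ioo_mem_nhdsGT hs.2] with u hu
    exact hD u ⟨hs.1.trans_lt hu.1, hu.2⟩
  have hderiv := eventually_deriv_neg_of_hubbleD₃_neg
    ((hright hH hs).mono Ioi_subset_Ici_self) ((hright hφ hs).mono Ioi_subset_Ici_self) hs0 hDs
  simpa only [hs0] using eventually_nhdsGT_lt_of_deriv_neg (hright hH hs) hderiv
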